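/- Let φ be a smooth positive function on an open subset U of {(r,s) ∈ ℝ² : 0 < s < r} with φ − s·φ_s + (r² − s²)·φ_ss ≠ 0 on U. Define Q := (1/(2r))·(r·φ_ss − φ_r + s·φ_rs)/(φ − s·φ_s + (r² − s²)·φ_ss), U₀ := (s·φ + (r² − s²)·φ_s)/φ and W := (s·φ_r + r·φ_s)/φ. Then identically on U: 2rs·Q·( U₀² − s·U₀ + (r² − s²)·(U₀)_s ) = 2r·U₀ − 2rs − 2r²·W + s·(r² − s²)·W_s + s²·W + s·U₀·W. -/

import Mathlib

/-- Partial derivative with respect to the first variable `r`. -/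
noncomputable def pderivR (f : ℝ → ℝ → ℝ) (r s : ℝ) : ℝ := deriv (fun t => f t s) r

/-- Partial derivative with respect to the second variable `s`. -/
noncomputable def pderivS (f : ℝ → ℝ → ℝ) (r s : ℝ) : ℝ := deriv (fun t => f r t) s

/-- Geodesic coefficient `Q := (1/(2r))·(rφ_ss − φ_r + sφ_rs)/(φ − sφ_s + (r² − s²)φ_ss)`. -/
noncomputable def Qc (φ : ℝ → ℝ → ℝ) (r s : ℝ) : ℝ :=
  (1 / (2 * r)) *
    ((r * pderivS (pderivS φ) r s - pderivR φ r s + s * pderivR (pderivS φ) r s) /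
      (φ r s - s * pderivS φ r s + (r ^ 2 - s ^ 2) * pderivS (pderivS φ) r s))

/-- `U₀ := (s·φ + (r² − s²)·φ_s)/φ`. -/
noncomputable def U0 (φ : ℝ → ℝ → ℝ) (r s : ℝ) : ℝ :=
  (s * φ r s + (r ^ 2 - s ^ 2) * pderivS φ r s) / φ r s

/-- `W := (s·φ_r + r·φ_s)/φ`. -/
noncomputable def Wc (φ : ℝ → ℝ → ℝ) (r s : ℝ) : ℝ :=
  (s * pderivR φ r s + r * pderivS φ r s) / φ r s

private lemma sliceS' {F : ℝ × ℝ → ℝ} {r s : ℝ} (hF : DifferentiableAt ℝ F (r, s)) :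
    HasDerivAt (fun t => F (r, t)) (fderiv ℝ F (r, s) (0, 1)) s := by
  have h1 : HasDerivAt (fun t : ℝ => ((r : ℝ), t)) ((0 : ℝ), (1 : ℝ)) s :=
    (hasDerivAt_const s r).prodMk (hasDerivAt_id s)
  exact hF.hasFDerivAt.comp_hasDerivAt s h1

private lemma sliceR' {F : ℝ × ℝ → ℝ} {r s : ℝ} (hF : DifferentiableAt ℝ F (r, s)) :
    HasDerivAt (fun t => F (t, s)) (fderiv ℝ F (r, s) (1, 0)) r := by
  have h1 : HasDerivAt (fun t : ℝ => (t, (s : ℝ))) ((1 : ℝ), (0 : ℝ)) r :=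
    (hasDerivAt_id r).prodMk (hasDerivAt_const r s)
  exact hF.hasFDerivAt.comp_hasDerivAt r h1

/-- The identity `2rs·Q·(U₀² − s·U₀ + (r² − s²)·(U₀)_s)
= 2r·U₀ − 2rs − 2r²·W + s(r² − s²)·W_s + s²·W + s·U₀·W` from the proof of
Theorem 3. -/
theorem stmt_12
    (U : Set (ℝ × ℝ)) (hU : IsOpen U)
    (hUsub : U ⊆ {p : ℝ × ℝ | 0 < p.2 ∧ p.2 < p.1})
    (φ : ℝ → ℝ → ℝ) (hφ : ContDiffOn ℝ (⊤ : ℕ∞) (fun p : ℝ × ℝ => φ p.1 p.2) U)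
    (hφpos : ∀ p ∈ U, 0 < φ p.1 p.2)
    (hden : ∀ p ∈ U, φ p.1 p.2 - p.2 * pderivS φ p.1 p.2
        + (p.1 ^ 2 - p.2 ^ 2) * pderivS (pderivS φ) p.1 p.2 ≠ 0) :
    ∀ p ∈ U,
      2 * p.1 * p.2 * Qc φ p.1 p.2 *
          ((U0 φ p.1 p.2) ^ 2 - p.2 * U0 φ p.1 p.2
            + (p.1 ^ 2 - p.2 ^ 2) * pderivS (U0 φ) p.1 p.2)
        = 2 * p.1 * U0 φ p.1 p.2 - 2 * p.1 * p.2 - 2 * p.1 ^ 2 * Wc φ p.1 p.2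
          + p.2 * (p.1 ^ 2 - p.2 ^ 2) * pderivS (Wc φ) p.1 p.2
          + p.2 ^ 2 * Wc φ p.1 p.2 + p.2 * U0 φ p.1 p.2 * Wc φ p.1 p.2 := by
  intro p hp
  obtain ⟨r, s⟩ := p
  obtain ⟨hs0, hsr⟩ : 0 < s ∧ s < r := hUsub hp
  have hr0 : (0 : ℝ) < r := hs0.trans hsr
  set F : ℝ × ℝ → ℝ := fun q => φ q.1 q.2 with hFdef
  set g : ℝ × ℝ → ℝ := fun q => fderiv ℝ F q ((0:ℝ), (1:ℝ)) with hgdef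
  set h : ℝ × ℝ → ℝ := fun q => fderiv ℝ F q ((1:ℝ), (0:ℝ)) with hhdef
  have ha : (0 : ℝ) < φ r s := hφpos _ hp
  have hFat : ∀ q ∈ U, ContDiffAt ℝ (⊤ : ℕ∞) F q := fun q hq => hφ.contDiffAt (hU.mem_nhds hq)
  have hF2 : ∀ q ∈ U, ContDiffAt ℝ (⊤ : ℕ∞) (fderiv ℝ F) q := fun q hq =>
    (hFat q hq).fderiv_right (by simp)
  have hgat : ∀ q ∈ U, ContDiffAt ℝ (⊤ : ℕ∞) g q := fun q hq =>
    (ContinuousLinearMap.apply ℝ ℝ ((0:ℝ), (1:ℝ))).contDiff.contDiffAt.comp q (hF2 q hq)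
  have hhat : ∀ q ∈ U, ContDiffAt ℝ (⊤ : ℕ∞) h q := fun q hq =>
    (ContinuousLinearMap.apply ℝ ℝ ((1:ℝ), (0:ℝ))).contDiff.contDiffAt.comp q (hF2 q hq)
  have hdF : ∀ q ∈ U, DifferentiableAt ℝ F q := fun q hq =>
    (hFat q hq).differentiableAt (by simp)
  have dg : DifferentiableAt ℝ g (r, s) := ((hgat _ hp).differentiableAt (by simp))
  have dh : DifferentiableAt ℝ h (r, s) := ((hhat _ hp).differentiableAt (by simp))
  -- eventually in the s-direction and r-direction we stay in U
  have hev : ∀ᶠ t in nhds s, (r, t) ∈ U :=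
    (Continuous.continuousAt (continuous_const.prodMk continuous_id)).preimage_mem_nhds
      (hU.mem_nhds hp)
  have hevR : ∀ᶠ t in nhds r, (t, s) ∈ U :=
    (Continuous.continuousAt (continuous_id.prodMk continuous_const)).preimage_mem_nhds
      (hU.mem_nhds hp)
  -- first partial derivatives
  have e1 : pderivS φ r s = g (r, s) := (sliceS' (hdF _ hp)).deriv
  have e2 : pderivR φ r s = h (r, s) := (sliceR' (hdF _ hp)).deriv
  have hevS : (fun t => pderivS φ r t) =ᶠ[nhds s] fun t => g (r, t) := by
    filter_upwards [hev] with t ht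
    exact (sliceS' (hdF _ ht)).deriv
  have hevRS : (fun t => pderivS φ t s) =ᶠ[nhds r] fun t => g (t, s) := by
    filter_upwards [hevR] with t ht
    exact (sliceS' (hdF _ ht)).deriv
  have e3 : pderivS (pderivS φ) r s = fderiv ℝ g (r, s) (0, 1) :=
    hevS.deriv_eq.trans (sliceS' dg).deriv
  have e4 : pderivR (pderivS φ) r s = fderiv ℝ g (r, s) (1, 0) :=
    hevRS.deriv_eq.trans (sliceR' dg).deriv
  -- symmetry of second derivatives
  have hd2 : DifferentiableAt ℝ (fderiv ℝ F) (r, s) :=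
    (hF2 _ hp).differentiableAt (by simp)
  have hgg : HasFDerivAt g
      ((ContinuousLinearMap.apply ℝ ℝ ((0:ℝ), (1:ℝ))).comp
        (fderiv ℝ (fderiv ℝ F) (r, s))) (r, s) :=
    ((ContinuousLinearMap.apply ℝ ℝ ((0:ℝ), (1:ℝ))).hasFDerivAt).comp (r, s) hd2.hasFDerivAt
  have hhh : HasFDerivAt h
      ((ContinuousLinearMap.apply ℝ ℝ ((1:ℝ), (0:ℝ))).comp
        (fderiv ℝ (fderiv ℝ F) (r, s))) (r, s) :=
    ((ContinuousLinearMap.apply ℝ ℝ ((1:ℝ), (0:ℝ))).hasFDerivAt).comp (r, s) hd2.hasFDerivAt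
  have hsym := (hFat _ hp).isSymmSndFDerivAt (by simp; exact WithTop.coe_le_coe.mpr le_top)
  have esym : fderiv ℝ h (r, s) ((0:ℝ), (1:ℝ)) = fderiv ℝ g (r, s) ((1:ℝ), (0:ℝ)) := by
    rw [hgg.fderiv, hhh.fderiv]
    simp only [ContinuousLinearMap.coe_comp', Function.comp_apply,
      ContinuousLinearMap.apply_apply]
    exact hsym.eq _ _
  -- slice derivatives at (r, s)
  have hF' : HasDerivAt (fun t => F (r, t)) (g (r, s)) s := sliceS' (hdF _ hp)
  have hg' : HasDerivAt (fun t => g (r, t)) (fderiv ℝ g (r, s) ((0:ℝ), (1:ℝ))) s := sliceS' dg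
  have hh' : HasDerivAt (fun t => h (r, t)) (fderiv ℝ g (r, s) ((1:ℝ), (0:ℝ))) s :=
    esym ▸ sliceS' dh
  -- derivative of U0 in the s-direction
  have hU0ev : (fun t => U0 φ r t) =ᶠ[nhds s]
      (fun t => (t * F (r, t) + (r ^ 2 - t ^ 2) * g (r, t)) / F (r, t)) := by
    filter_upwards [hev] with t ht
    show (t * F (r, t) + (r ^ 2 - t ^ 2) * deriv (fun u => F (r, u)) t) / F (r, t) = _
    rw [(sliceS' (hdF _ ht)).deriv]
  have hsq : HasDerivAt (fun t : ℝ => r ^ 2 - t ^ 2) (0 - 2 * s) s := by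
    exact ((hasDerivAt_const s (r ^ 2)).sub (hasDerivAt_pow 2 s)).congr_deriv (by simp)
  have hU0' : HasDerivAt (fun t => (t * F (r, t) + (r ^ 2 - t ^ 2) * g (r, t)) / F (r, t))
      ((((1 * φ r s + s * g (r, s)) +
          ((0 - 2 * s) * g (r, s) + (r ^ 2 - s ^ 2) * fderiv ℝ g (r, s) ((0:ℝ), (1:ℝ)))) * φ r s
        - (s * φ r s + (r ^ 2 - s ^ 2) * g (r, s)) * g (r, s)) / φ r s ^ 2) s :=
    (((hasDerivAt_id s).mul hF').add (hsq.mul hg')).div hF' ha.ne'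
  have eU0s : pderivS (U0 φ) r s =
      ((((1 * φ r s + s * g (r, s)) +
          ((0 - 2 * s) * g (r, s) + (r ^ 2 - s ^ 2) * fderiv ℝ g (r, s) ((0:ℝ), (1:ℝ)))) * φ r s
        - (s * φ r s + (r ^ 2 - s ^ 2) * g (r, s)) * g (r, s)) / φ r s ^ 2) :=
    hU0ev.deriv_eq.trans hU0'.deriv
  -- derivative of Wc in the s-direction
  have hWev : (fun t => Wc φ r t) =ᶠ[nhds s]
      (fun t => (t * h (r, t) + r * g (r, t)) / F (r, t)) := by
    filter_upwards [hev] with t ht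
    show (t * deriv (fun u => F (u, t)) r + r * deriv (fun u => F (r, u)) t) / F (r, t) = _
    rw [(sliceS' (hdF _ ht)).deriv, (sliceR' (hdF _ ht)).deriv]
  have hW' : HasDerivAt (fun t => (t * h (r, t) + r * g (r, t)) / F (r, t))
      ((((1 * h (r, s) + s * fderiv ℝ g (r, s) ((1:ℝ), (0:ℝ))) +
          (0 * g (r, s) + r * fderiv ℝ g (r, s) ((0:ℝ), (1:ℝ)))) * φ r s
        - (s * h (r, s) + r * g (r, s)) * g (r, s)) / φ r s ^ 2) s :=
    (((hasDerivAt_id s).mul hh').add ((hasDerivAt_const s r).mul hg')).div hF' ha.ne'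
  have eWs : pderivS (Wc φ) r s =
      ((((1 * h (r, s) + s * fderiv ℝ g (r, s) ((1:ℝ), (0:ℝ))) +
          (0 * g (r, s) + r * fderiv ℝ g (r, s) ((0:ℝ), (1:ℝ)))) * φ r s
        - (s * h (r, s) + r * g (r, s)) * g (r, s)) / φ r s ^ 2) :=
    hWev.deriv_eq.trans hW'.deriv
  -- abbreviations for the values
  have hQval : Qc φ r s = (1 / (2 * r)) *
      ((r * fderiv ℝ g (r, s) ((0:ℝ), (1:ℝ)) - h (r, s) + s * fderiv ℝ g (r, s) ((1:ℝ), (0:ℝ))) /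
        (φ r s - s * g (r, s) + (r ^ 2 - s ^ 2) * fderiv ℝ g (r, s) ((0:ℝ), (1:ℝ)))) := by
    rw [Qc, e1, e2, e3, e4]
  have hU0val : U0 φ r s = (s * φ r s + (r ^ 2 - s ^ 2) * g (r, s)) / φ r s := by
    rw [U0, e1]
  have hWval : Wc φ r s = (s * h (r, s) + r * g (r, s)) / φ r s := by
    rw [Wc, e1, e2]
  have hD : φ r s - s * g (r, s) + (r ^ 2 - s ^ 2) * fderiv ℝ g (r, s) ((0:ℝ), (1:ℝ)) ≠ 0 := by
    have := hden (r, s) hp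
    rwa [e1, e3] at this
  show 2 * r * s * Qc φ r s * _ = _
  rw [hQval, hU0val, hWval, eU0s, eWs]
  set D := φ r s - s * g (r, s) + (r ^ 2 - s ^ 2) * fderiv ℝ g (r, s) ((0:ℝ), (1:ℝ)) with hDdef
  field_simp
  rw [hDdef]
  ring
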